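/- Let Q be a quandle with p elements, p prime. Then Q is connected if and only if p divides the order of Inn(Q). -/

import Mathlib

universe u

/-- A quandle with a *right* self-distributive operation `x ▷ y`, following
Ehrman–Gurpinar–Thibault–Yetter. -/
class RQuandle (Q : Type u) where
  act : Q → Q → Q
  act_self : ∀ x : Q, act x x = x
  act_rinv : ∀ a b : Q, ∃! y, act y a = b
  act_distrib : ∀ a b c : Q, act (act a b) c = act (act a c) (act b c)

infixl:65 " ▷ " => RQuandle.act

namespace RQuandle

variable {Q : Type u} [RQuandle Q]

/-- The inner automorphism `S_y : x ↦ x ▷ y`, as a permutation of `Q`. -/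
noncomputable def SPerm (y : Q) : Equiv.Perm Q :=
  Equiv.ofBijective (fun x => x ▷ y)
    ⟨fun a b h => by
        obtain ⟨c, _, hu⟩ := RQuandle.act_rinv y (b ▷ y)
        exact (hu a h).trans (hu b rfl).symm,
      fun b => (RQuandle.act_rinv y b).exists⟩

@[simp] lemma SPerm_apply (x y : Q) : SPerm y x = x ▷ y := rfl

/-- The inner automorphism group of a quandle: the subgroup of `Equiv.Perm Q`
generated by the maps `S_y`. -/
def Inn (Q : Type u) [RQuandle Q] : Subgroup (Equiv.Perm Q) :=
  Subgroup.closure (Set.range (SPerm : Q → Equiv.Perm Q))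

lemma SPerm_mem_Inn (y : Q) : SPerm y ∈ Inn Q :=
  Subgroup.subset_closure ⟨y, rfl⟩

/-- A quandle is (algebraically) connected when `Inn Q` acts transitively. -/
def Connected (Q : Type u) [RQuandle Q] : Prop :=
  ∀ x y : Q, ∃ p ∈ Inn Q, p x = y

/-- The orbit of `s` under the inner automorphism group. -/
def orbitSet (s : Q) : Set Q := {t | ∃ p ∈ Inn Q, p s = t}

/-- `f` is an automorphism of the quandle `Q`. -/
def IsQAut (f : Equiv.Perm Q) : Prop := ∀ x y : Q, f (x ▷ y) = f x ▷ f y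

/-- Key conjugation identity: in left-to-right (right action) convention this is
`S_{x ▷ y} = S_y⁻¹ S_x S_y`. -/
lemma SPerm_conj (x y : Q) : SPerm (x ▷ y) = SPerm y * SPerm x * (SPerm y)⁻¹ := by
  rw [eq_mul_inv_iff_mul_eq]
  ext u
  simp only [Equiv.Perm.mul_apply, SPerm_apply]
  exact (RQuandle.act_distrib u x y).symm

/-- Relators for the universal augmentation group `Γ_Q`: `|x ▷ y| = |y|⁻¹ |x| |y|`. -/
def augRels (Q : Type u) [RQuandle Q] : Set (FreeGroup Q) :=
  {w | ∃ x y : Q,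
    w = FreeGroup.of (x ▷ y) * ((FreeGroup.of y)⁻¹ * FreeGroup.of x * FreeGroup.of y)⁻¹}

/-- The universal augmentation group `Γ_Q` of a quandle. -/
abbrev Gamma (Q : Type u) [RQuandle Q] := PresentedGroup (augRels Q)

/-- The generator `|x| ∈ Γ_Q`. -/
def gen (x : Q) : Gamma Q := PresentedGroup.of x

/-- The canonical homomorphism `Γ_Q → Aut(Q)` sending `|y|` to `S_y`.  Since the
paper composes automorphisms as right actions, this is a homomorphism into the
opposite of the permutation group. -/
noncomputable def canHom (Q : Type u) [RQuandle Q] : Gamma Q →* (Equiv.Perm Q)ᵐᵒᵖ :=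
  PresentedGroup.toGroup (f := fun y => MulOpposite.op (SPerm y)) (by
    rintro w ⟨x, y, rfl⟩
    simp only [map_mul, map_inv, FreeGroup.lift_apply_of]
    rw [← MulOpposite.op_inv, ← MulOpposite.op_mul, ← MulOpposite.op_mul, SPerm_conj]
    simp [mul_assoc])

@[simp] lemma canHom_gen (y : Q) : canHom Q (gen y) = MulOpposite.op (SPerm y) :=
  PresentedGroup.toGroup.of _

lemma orbit_act_mem {s x : Q} (y : Q) (hx : x ∈ orbitSet s) : x ▷ y ∈ orbitSet s := by
  obtain ⟨p, hp, rfl⟩ := hx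
  exact ⟨SPerm y * p, mul_mem (SPerm_mem_Inn y) hp, rfl⟩

lemma orbit_actinv_mem {s x : Q} (y : Q) (hx : x ∈ orbitSet s) :
    (SPerm y).symm x ∈ orbitSet s := by
  obtain ⟨p, hp, rfl⟩ := hx
  exact ⟨(SPerm y)⁻¹ * p, mul_mem (inv_mem (SPerm_mem_Inn y)) hp, rfl⟩

lemma orbit_mem_iff (t : Q) (y : Q) {u : Q} :
    u ∈ orbitSet t ↔ u ▷ y ∈ orbitSet t := by
  constructor
  · exact fun h => orbit_act_mem y h
  · intro h
    have := orbit_actinv_mem y h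
    rw [← SPerm_apply u y, Equiv.symm_apply_apply] at this
    exact this

/-- Each orbit of `Inn Q` is a subquandle. -/
instance orbitQuandle (s : Q) : RQuandle (orbitSet s) where
  act a b := ⟨a.1 ▷ b.1, orbit_act_mem b.1 a.2⟩
  act_self a := Subtype.ext (RQuandle.act_self a.1)
  act_rinv a b := by
    refine ⟨⟨(SPerm a.1).symm b.1, orbit_actinv_mem a.1 b.2⟩, Subtype.ext ?_, ?_⟩
    · exact (SPerm a.1).apply_symm_apply b.1
    · rintro ⟨z, hz⟩ h
      apply Subtype.ext
      have hz' : z ▷ a.1 = b.1 := congrArg Subtype.val h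
      show z = (SPerm a.1).symm b.1
      rw [← hz']
      exact ((SPerm a.1).symm_apply_apply z).symm
  act_distrib a b c := Subtype.ext (RQuandle.act_distrib a.1 b.1 c.1)

/-- Restriction of `S_x` to the orbit of `t`. -/
noncomputable def phi (t : Q) (x : Q) : Equiv.Perm (orbitSet t) :=
  (SPerm x).subtypePerm (fun u => (orbit_mem_iff t x (u := u)).symm)

/-- The quandle axioms, as a predicate on a binary operation. -/
def IsRQuandleOp {A : Type u} (op : A → A → A) : Prop :=
  (∀ x, op x x = x) ∧ (∀ a b, ∃! y, op y a = b) ∧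
    ∀ a b c, op (op a b) c = op (op a c) (op b c)

end RQuandle

/-!
Only the permutation group `Inn Q` matters: a group `G` of permutations of a set with `p`
elements, `p` prime, is transitive iff `p ∣ |G|`. Transitivity makes `p` the index of a point
stabilizer. Conversely, Cauchy's theorem gives an element of order `p`, which is then a
`p`-cycle moving every point, so already its powers act transitively.
-/

open Equiv MulAction

theorem MulAction.card_dvd_card_of_isPretransitive (G : Type*) {X : Type*} [Group G] [Finite G]
    [MulAction G X] [IsPretransitive G X] [Nonempty X] : Nat.card X ∣ Nat.card G := by
  obtain ⟨x⟩ := ‹Nonempty X›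
  rw [← index_stabilizer_of_transitive G x]
  exact Subgroup.index_dvd_card _

theorem Equiv.Perm.sameCycle_of_orderOf_eq_prime_card {X : Type*} [Fintype X]
    {σ : Perm X} (hp : (Fintype.card X).Prime) (hσ : orderOf σ = Fintype.card X) (x y : X) :
    σ.SameCycle x y := by
  classical
  have hcycle : σ.IsCycle := Perm.isCycle_of_prime_order'' hp hσ
  have hsupport : σ.support = Finset.univ :=
    Finset.eq_univ_of_card _ (hcycle.orderOf.symm.trans hσ)
  exact hcycle.sameCycle (Perm.mem_support.mp (hsupport ▸ Finset.mem_univ x))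
    (Perm.mem_support.mp (hsupport ▸ Finset.mem_univ y))

theorem Subgroup.isPretransitive_of_prime_card_dvd {X : Type*} [Fintype X] (G : Subgroup (Perm X))
    (hp : (Fintype.card X).Prime) (hdvd : Fintype.card X ∣ Nat.card G) : IsPretransitive G X := by
  have : Fact (Fintype.card X).Prime := ⟨hp⟩
  obtain ⟨σ, hσ⟩ := exists_prime_orderOf_dvd_card' _ hdvd
  rw [← Subgroup.orderOf_coe] at hσ
  refine ⟨fun x y => ?_⟩
  obtain ⟨n, hn⟩ := Perm.sameCycle_of_orderOf_eq_prime_card hp hσ x y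
  exact ⟨σ ^ n, hn⟩

theorem Subgroup.isPretransitive_iff_prime_card_dvd {X : Type*} [Fintype X]
    (G : Subgroup (Perm X)) (hp : (Fintype.card X).Prime) :
    IsPretransitive G X ↔ Fintype.card X ∣ Nat.card G := by
  have : Nonempty X := Fintype.card_pos_iff.mp hp.pos
  refine ⟨fun _ => ?_, G.isPretransitive_of_prime_card_dvd hp⟩
  simpa only [Nat.card_eq_fintype_card] using card_dvd_card_of_isPretransitive G (X := X)

namespace RQuandle

theorem connected_iff_isPretransitive {Q : Type u} [RQuandle Q] :
    Connected Q ↔ IsPretransitive (Inn Q) Q :=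
  ⟨fun h => ⟨fun x y => let ⟨g, hg, hgx⟩ := h x y; ⟨⟨g, hg⟩, hgx⟩⟩,
    fun ⟨h⟩ x y => let ⟨g, hgx⟩ := h x y; ⟨g, g.2, hgx⟩⟩

end RQuandle

open RQuandle in
theorem connected_iff_prime_dvd {Q : Type u} [RQuandle Q] [Fintype Q] {p : ℕ}
    (hp : p.Prime) (hcard : Fintype.card Q = p) :
    Connected Q ↔ p ∣ Nat.card ↥(Inn Q) := by
  subst hcard
  rw [connected_iff_isPretransitive, (Inn Q).isPretransitive_iff_prime_card_dvd hp]
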